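/- For all z ≥ 0, the integral ∫₀^∞ (1+|z-z'|)^{-1} (1+z')^{-2/3} dz' is bounded by C · ln(2+z) · (1+z)^{-2/3} for a universal constant C. -/

import Mathlib

/-!
Split the half-line at `2z + 1`. On `[0, 2z + 1]` the two factors `1 + |z - x|` and `1 + x` add up
to at least `1 + z`, so one of them is at least `(1 + z) / 2`; hence the integrand is at most
`2 (1 + z)⁻¹ (1 + x)^(-p) + 2^p (1 + z)^(-p) (1 + |z - x|)⁻¹`. The first term integrates to
`O((1 + z)^(-p))` because `p < 1`, the second to `O((1 + z)^(-p) log (2 + z))`. Beyond `2z + 1`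
the integrand is at most `2 x^(-1-p)`, whose tail integral is again `O((1 + z)^(-p))`.
This works for any exponent `0 < p < 1` in place of `2/3`.
-/

open MeasureTheory Real Set intervalIntegral

lemma continuous_inv_one_add_abs_sub (z : ℝ) : Continuous fun x : ℝ => (1 + |z - x|)⁻¹ :=
  (continuous_const.add (continuous_const.sub continuous_id).abs).inv₀
    fun x => (by positivity : (0 : ℝ) < 1 + |z - x|).ne'

lemma continuousOn_one_add_rpow (p : ℝ) : ContinuousOn (fun x : ℝ => (1 + x) ^ p) (Ici 0) :=
  (continuousOn_const.add continuousOn_id).rpow_const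
    fun _ hx => Or.inl (add_pos_of_pos_of_nonneg one_pos hx).ne'

lemma continuousOn_inv_one_add_abs_sub_mul_one_add_rpow (z p : ℝ) :
    ContinuousOn (fun x : ℝ => (1 + |z - x|)⁻¹ * (1 + x) ^ p) (Ici 0) :=
  (continuous_inv_one_add_abs_sub z).continuousOn.mul (continuousOn_one_add_rpow p)

lemma integral_one_add_rpow_neg {p c : ℝ} (hp : p < 1) :
    ∫ x in (0:ℝ)..c, (1 + x) ^ (-p) = ((1 + c) ^ (1 - p) - 1) / (1 - p) := by
  rw [integral_comp_add_left (fun x => x ^ (-p)), integral_rpow (Or.inl (by linarith)),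
    add_zero, one_rpow, neg_add_eq_sub]

lemma integral_inv_one_add_abs_sub {a b z : ℝ} (ha : a ≤ z) (hb : z ≤ b) :
    ∫ x in a..b, (1 + |z - x|)⁻¹ = log (1 + (z - a)) + log (1 + (b - z)) := by
  have hcont := continuous_inv_one_add_abs_sub z
  have hleft : ∫ x in a..z, (1 + |z - x|)⁻¹ = ∫ x in a..z, ((1 + z) - x)⁻¹ := by
    refine integral_congr fun x hx => ?_
    rw [uIcc_of_le ha] at hx
    simp only [abs_of_nonneg (sub_nonneg.2 hx.2), add_sub_assoc]
  have hright : ∫ x in z..b, (1 + |z - x|)⁻¹ = ∫ x in z..b, (x + (1 - z))⁻¹ := by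
    refine integral_congr fun x hx => ?_
    rw [uIcc_of_le hb] at hx
    simp only [abs_sub_comm z x, abs_of_nonneg (sub_nonneg.2 hx.1)]
    ring_nf
  rw [← integral_add_adjacent_intervals (hcont.intervalIntegrable a z)
      (hcont.intervalIntegrable z b), hleft, hright, integral_comp_sub_left (fun x => x⁻¹),
    integral_comp_add_right (fun x => x⁻¹), integral_inv_of_pos (by linarith) (by linarith),
    integral_inv_of_pos (by linarith) (by linarith)]
  ring_nf

lemma inv_mul_rpow_neg_le_of_le_add {a b s p : ℝ} (ha : 0 < a) (hb : 0 < b) (hs : 0 < s)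
    (hp : 0 ≤ p) (hsab : s ≤ a + b) :
    a⁻¹ * b ^ (-p) ≤ 2 * s⁻¹ * b ^ (-p) + 2 ^ p * s ^ (-p) * a⁻¹ := by
  have hhalf : (s / 2)⁻¹ = 2 * s⁻¹ := by rw [inv_div, div_eq_mul_inv]
  rcases le_total s (2 * a) with hsa | hsb
  · have : a⁻¹ ≤ 2 * s⁻¹ := hhalf ▸ inv_anti₀ (by positivity) (by linarith)
    have : a⁻¹ * b ^ (-p) ≤ 2 * s⁻¹ * b ^ (-p) := by gcongr
    have : 0 ≤ 2 ^ p * s ^ (-p) * a⁻¹ := by positivity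
    linarith
  · have : b ^ (-p) ≤ 2 ^ p * s ^ (-p) := calc
      b ^ (-p) ≤ (s / 2) ^ (-p) :=
        rpow_le_rpow_of_nonpos (by positivity) (by linarith) (by linarith)
      _ = 2 ^ p * s ^ (-p) := by
        rw [div_rpow hs.le zero_le_two, rpow_neg zero_le_two, div_inv_eq_mul, mul_comm]
    have : a⁻¹ * b ^ (-p) ≤ a⁻¹ * (2 ^ p * s ^ (-p)) := by gcongr
    have : 0 ≤ 2 * s⁻¹ * b ^ (-p) := by positivity
    linarith

lemma inv_one_add_abs_sub_mul_rpow_neg_le {p z x : ℝ} (hp : 0 ≤ p) (hx : 0 < x)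
    (hzx : 2 * z ≤ x) :
    (1 + |z - x|)⁻¹ * (1 + x) ^ (-p) ≤ 2 * x ^ (-(1 + p)) := by
  have h1 : (1 + |z - x|)⁻¹ ≤ 2 * x⁻¹ := calc
    (1 + |z - x|)⁻¹ ≤ (x / 2)⁻¹ :=
      inv_anti₀ (by positivity) (by linarith [abs_sub_comm z x, le_abs_self (x - z)])
    _ = 2 * x⁻¹ := by rw [inv_div, div_eq_mul_inv]
  have h2 : (1 + x) ^ (-p) ≤ x ^ (-p) := rpow_le_rpow_of_nonpos hx (by linarith) (by linarith)
  calc (1 + |z - x|)⁻¹ * (1 + x) ^ (-p) ≤ 2 * x⁻¹ * x ^ (-p) := by gcongr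
    _ = 2 * x ^ (-(1 + p)) := by rw [neg_add, rpow_add hx, rpow_neg_one, mul_assoc]

lemma integral_inv_one_add_abs_sub_mul_rpow_neg_le {p z : ℝ} (hp0 : 0 ≤ p) (hp1 : p < 1)
    (hz : 0 ≤ z) :
    ∫ x in (0 : ℝ)..(2 * z + 1), (1 + |z - x|)⁻¹ * (1 + x) ^ (-p)
      ≤ (4 / (1 - p) + 4 * log (2 + z)) * (1 + z) ^ (-p) := by
  set s := 1 + z
  have hs : 0 < s := by positivity
  have hL : (0 : ℝ) ≤ 2 * z + 1 := by positivity
  have hpow := (continuousOn_one_add_rpow (-p)).mono (Icc_subset_Ici_self : Icc 0 (2 * z + 1) ⊆ _)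
  have habs := (continuous_inv_one_add_abs_sub z).continuousOn (s := Icc 0 (2 * z + 1))
  have hmajor : ∀ x ∈ Icc 0 (2 * z + 1), (1 + |z - x|)⁻¹ * (1 + x) ^ (-p)
      ≤ 2 * s⁻¹ * (1 + x) ^ (-p) + 2 ^ p * s ^ (-p) * (1 + |z - x|)⁻¹ := fun x hx =>
    inv_mul_rpow_neg_le_of_le_add (by positivity) (by linarith [hx.1]) hs hp0
      (by linarith [le_abs_self (z - x)])
  have hsp : s⁻¹ * s ^ (1 - p) = s ^ (-p) := by
    rw [← rpow_neg_one, ← rpow_add hs]; ring_nf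
  have h2p : (2 : ℝ) ^ (1 - p) ≤ 2 := rpow_le_self_of_one_le one_le_two (by linarith)
  have h2p' : (2 : ℝ) ^ p ≤ 2 := rpow_le_self_of_one_le one_le_two (by linarith)
  have hpow_part : 2 * s⁻¹ * (((1 + (2 * z + 1)) ^ (1 - p) - 1) / (1 - p))
      ≤ 4 / (1 - p) * s ^ (-p) := calc
    _ ≤ 2 * s⁻¹ * ((2 * s) ^ (1 - p) / (1 - p)) := by
        rw [show 1 + (2 * z + 1) = 2 * s by ring]; gcongr; linarith
    _ = 2 * 2 ^ (1 - p) / (1 - p) * s ^ (-p) := by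
        rw [mul_rpow zero_le_two hs.le, ← hsp]; ring
    _ ≤ 4 / (1 - p) * s ^ (-p) := by gcongr; linarith
  have hlog_part : 2 ^ p * s ^ (-p) * (log s + log (2 + z)) ≤ 4 * log (2 + z) * s ^ (-p) := by
    have hlog : log s ≤ log (2 + z) := log_le_log hs (by linarith)
    have : 0 ≤ log s := log_nonneg (by linarith)
    have : 0 ≤ log (2 + z) := log_nonneg (by linarith)
    calc 2 ^ p * s ^ (-p) * (log s + log (2 + z))
        ≤ 2 * s ^ (-p) * (log (2 + z) + log (2 + z)) := by gcongr
      _ = 4 * log (2 + z) * s ^ (-p) := by ring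
  calc ∫ x in (0 : ℝ)..(2 * z + 1), (1 + |z - x|)⁻¹ * (1 + x) ^ (-p)
      ≤ ∫ x in (0 : ℝ)..(2 * z + 1),
          (2 * s⁻¹ * (1 + x) ^ (-p) + 2 ^ p * s ^ (-p) * (1 + |z - x|)⁻¹) :=
        integral_mono_on hL ((habs.mul hpow).intervalIntegrable_of_Icc hL)
          (((continuousOn_const.mul hpow).add
            (continuousOn_const.mul habs)).intervalIntegrable_of_Icc hL) hmajor
    _ = 2 * s⁻¹ * (((1 + (2 * z + 1)) ^ (1 - p) - 1) / (1 - p))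
          + 2 ^ p * s ^ (-p) * (log s + log (2 + z)) := by
        rw [intervalIntegral.integral_add, intervalIntegral.integral_const_mul,
          intervalIntegral.integral_const_mul, integral_one_add_rpow_neg hp1,
          integral_inv_one_add_abs_sub hz (by linarith), sub_zero,
          show 1 + (2 * z + 1 - z) = 2 + z by ring]
        · exact (continuousOn_const.mul hpow).intervalIntegrable_of_Icc hL
        · exact (continuousOn_const.mul habs).intervalIntegrable_of_Icc hL
    _ ≤ (4 / (1 - p) + 4 * log (2 + z)) * s ^ (-p) := by linarith

lemma integrableOn_Ioi_inv_one_add_abs_sub_mul_rpow_neg {p z c : ℝ} (hp : 0 < p) (hc : 0 < c)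
    (hzc : 2 * z ≤ c) :
    IntegrableOn (fun x => (1 + |z - x|)⁻¹ * (1 + x) ^ (-p)) (Ioi c) := by
  refine ((integrableOn_Ioi_rpow_of_lt (by linarith : -(1 + p) < -1) hc).const_mul 2).mono' ?_ ?_
  · exact ((continuousOn_inv_one_add_abs_sub_mul_one_add_rpow z (-p)).mono
      fun x hx => (hc.trans (mem_Ioi.1 hx)).le).aestronglyMeasurable measurableSet_Ioi
  · filter_upwards [ae_restrict_mem measurableSet_Ioi] with x hx
    have hx0 : 0 < x := hc.trans hx
    rw [norm_of_nonneg (mul_nonneg (by positivity) (rpow_nonneg (by linarith) _))]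
    exact inv_one_add_abs_sub_mul_rpow_neg_le hp.le hx0 (hzc.trans hx.le)

lemma setIntegral_Ioi_inv_one_add_abs_sub_mul_rpow_neg_le {p z c : ℝ} (hp : 0 < p) (hc : 0 < c)
    (hzc : 2 * z ≤ c) :
    ∫ x in Ioi c, (1 + |z - x|)⁻¹ * (1 + x) ^ (-p) ≤ 2 / p * c ^ (-p) := calc
  ∫ x in Ioi c, (1 + |z - x|)⁻¹ * (1 + x) ^ (-p) ≤ ∫ x in Ioi c, 2 * x ^ (-(1 + p)) :=
    setIntegral_mono_on (integrableOn_Ioi_inv_one_add_abs_sub_mul_rpow_neg hp hc hzc)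
      ((integrableOn_Ioi_rpow_of_lt (by linarith) hc).const_mul 2) measurableSet_Ioi
      fun x hx => inv_one_add_abs_sub_mul_rpow_neg_le hp.le (hc.trans hx) (hzc.trans hx.le)
  _ = 2 / p * c ^ (-p) := by
    rw [MeasureTheory.integral_const_mul, integral_Ioi_rpow_of_lt (by linarith) hc,
      show -(1 + p) + 1 = -p by ring, neg_div_neg_eq]
    ring

theorem setIntegral_Ioi_zero_inv_one_add_abs_sub_mul_rpow_neg_le {p z : ℝ} (hp0 : 0 < p)
    (hp1 : p < 1) (hz : 0 ≤ z) :
    ∫ x in Ioi 0, (1 + |z - x|)⁻¹ * (1 + x) ^ (-p)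
      ≤ (4 / (1 - p) + 2 / p + 4 * log (2 + z)) * (1 + z) ^ (-p) := by
  have hc : 0 < 2 * z + 1 := by positivity
  have hzc : 2 * z ≤ 2 * z + 1 := by linarith
  rw [← integral_interval_add_Ioi'
    (((continuousOn_inv_one_add_abs_sub_mul_one_add_rpow z (-p)).mono Icc_subset_Ici_self
      ).intervalIntegrable_of_Icc hc.le)
    (integrableOn_Ioi_inv_one_add_abs_sub_mul_rpow_neg hp0 hc hzc)]
  have hhead := integral_inv_one_add_abs_sub_mul_rpow_neg_le hp0.le hp1 hz
  have htail := setIntegral_Ioi_inv_one_add_abs_sub_mul_rpow_neg_le hp0 hc hzc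
  have hcutoff : 2 / p * (2 * z + 1) ^ (-p) ≤ 2 / p * (1 + z) ^ (-p) :=
    mul_le_mul_of_nonneg_left
      (rpow_le_rpow_of_nonpos (by positivity) (by linarith) (by linarith)) (by positivity)
  linarith

theorem integral_bound_1 :
    ∃ C : ℝ, 0 < C ∧ ∀ z : ℝ, 0 ≤ z →
      (∫ z' in Set.Ioi (0:ℝ), (1 + |z - z'|)⁻¹ * (1 + z') ^ (-(2:ℝ)/3))
        ≤ C * Real.log (2 + z) * (1 + z) ^ (-(2:ℝ)/3) := by
  refine ⟨34, by norm_num, fun z hz => ?_⟩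
  have hlog : 1 / 2 < log (2 + z) :=
    (log_two_gt_d9.trans_le (log_le_log two_pos (by linarith : (2 : ℝ) ≤ 2 + z))).trans'
      (by norm_num)
  have hconst : 4 / (1 - 2 / 3) + 2 / (2 / 3) + 4 * log (2 + z) ≤ 34 * log (2 + z) := by
    norm_num; linarith
  rw [neg_div]
  calc ∫ x in Ioi 0, (1 + |z - x|)⁻¹ * (1 + x) ^ (-(2 / 3 : ℝ))
      ≤ (4 / (1 - 2 / 3) + 2 / (2 / 3) + 4 * log (2 + z)) * (1 + z) ^ (-(2 / 3 : ℝ)) :=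
        setIntegral_Ioi_zero_inv_one_add_abs_sub_mul_rpow_neg_le (by norm_num) (by norm_num) hz
    _ ≤ 34 * log (2 + z) * (1 + z) ^ (-(2 / 3 : ℝ)) :=
        mul_le_mul_of_nonneg_right hconst (rpow_nonneg (by linarith) _)
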